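/- Let n ≥ 3 and let i, j ∈ {1,…,n−1} with |i−j| = 1. Then the element B_{ij} = σ_i + σ_j − (q−1) is invertible in the singular Hecke algebra H(SB_n), with inverse −q^{−1}(q+1)^{−2} (q(q−1) − 2qσ_i − 2qσ_j − (q−1)σ_iσ_j − (q−1)σ_jσ_i + 2σ_iσ_jσ_i). -/

import Mathlib

noncomputable section
open scoped Classical

/-- `𝕂 = ℂ(q)`. -/
abbrev K : Type := RatFunc ℂ
/-- `𝕂(z)`. -/
abbrev Kz : Type := RatFunc K
/-- the variable `q`. -/
def q : K := RatFunc.X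
/-- the variable `z`. -/
def z : Kz := RatFunc.X

/-- Generators of the singular braid monoid on `n` strands:
`s i` is `σ_{i+1}`, `si i` is `σ_{i+1}⁻¹`, `t i` is `τ_{i+1}` (0-indexed `i`). -/
inductive SBGen (n : ℕ) : Type
  | s (i : Fin (n - 1))
  | si (i : Fin (n - 1))
  | t (i : Fin (n - 1))

/-- `|i - j| = 1`. -/
def adj {n : ℕ} (i j : Fin (n - 1)) : Prop := (i : ℕ) + 1 = (j : ℕ) ∨ (j : ℕ) + 1 = (i : ℕ)
/-- `|i - j| ≥ 2`. -/
def far {n : ℕ} (i j : Fin (n - 1)) : Prop := (i : ℕ) + 2 ≤ (j : ℕ) ∨ (j : ℕ) + 2 ≤ (i : ℕ)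

open FreeMonoid in
/-- The defining relations of the singular braid monoid. -/
inductive SBRel (n : ℕ) : FreeMonoid (SBGen n) → FreeMonoid (SBGen n) → Prop
  | inv_right (i) : SBRel n (of (.s i) * of (.si i)) 1
  | inv_left (i) : SBRel n (of (.si i) * of (.s i)) 1
  | sigma_tau (i) : SBRel n (of (.s i) * of (.t i)) (of (.t i) * of (.s i))
  | braid (i j) : adj i j →
      SBRel n (of (.s i) * of (.s j) * of (.s i)) (of (.s j) * of (.s i) * of (.s j))
  | braid_tau (i j) : adj i j →
      SBRel n (of (.s i) * of (.s j) * of (.t i)) (of (.t j) * of (.s i) * of (.s j))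
  | ss_comm (i j) : far i j → SBRel n (of (.s i) * of (.s j)) (of (.s j) * of (.s i))
  | st_comm (i j) : far i j → SBRel n (of (.s i) * of (.t j)) (of (.t j) * of (.s i))
  | tt_comm (i j) : far i j → SBRel n (of (.t i) * of (.t j)) (of (.t j) * of (.t i))

/-- The congruence generated by the singular braid relations. -/
def SBcon (n : ℕ) : Con (FreeMonoid (SBGen n)) := conGen (SBRel n)

/-- The singular braid monoid `SB_n`. -/
def SB (n : ℕ) : Type := (SBcon n).Quotient

instance (n : ℕ) : Monoid (SB n) := Con.monoid _

/-- The generator `σ_{i+1}` of `SB_n`. -/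
def sσ {n : ℕ} (i : Fin (n - 1)) : SB n := (SBcon n).mk' (FreeMonoid.of (.s i))
/-- The generator `σ_{i+1}⁻¹` of `SB_n`. -/
def sσi {n : ℕ} (i : Fin (n - 1)) : SB n := (SBcon n).mk' (FreeMonoid.of (.si i))
/-- The generator `τ_{i+1}` of `SB_n`. -/
def sτ {n : ℕ} (i : Fin (n - 1)) : SB n := (SBcon n).mk' (FreeMonoid.of (.t i))

/-- Number of singular points of a generator. -/
def genDeg {n : ℕ} : SBGen n → Multiplicative ℕ
  | .t _ => Multiplicative.ofAdd 1
  | _ => 1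

/-- Number of singular points of a word. -/
def degF (n : ℕ) : FreeMonoid (SBGen n) →* Multiplicative ℕ := FreeMonoid.lift genDeg

lemma degF_rel {n : ℕ} : SBcon n ≤ Con.ker (degF n) := by
  refine Con.conGen_le.mpr ?_
  rintro x y h
  rw [Con.ker_rel]
  cases h <;>
    simp [degF, genDeg, mul_comm]

/-- The number of singular points, as a monoid homomorphism. -/
def deg {n : ℕ} : SB n →* Multiplicative ℕ := Con.lift _ (degF n) degF_rel

/-- The number of singular points of a singular braid. -/
def ndeg {n : ℕ} (β : SB n) : ℕ := Multiplicative.toAdd (deg β)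

/-- `S_d B_n` : the set of singular braids on `n` strands with `d` singular points. -/
def SdB (d n : ℕ) : Set (SB n) := {β | ndeg β = d}

lemma ndeg_mul {n : ℕ} (α β : SB n) : ndeg (α * β) = ndeg α + ndeg β := by
  simp [ndeg, map_mul]

lemma ndeg_one {n : ℕ} : ndeg (1 : SB n) = 0 := by simp [ndeg]

lemma ndeg_pow {n : ℕ} (β : SB n) (m : ℕ) : ndeg (β ^ m) = m * ndeg β := by
  induction m with
  | zero => simp [ndeg_one]
  | succ m ih => rw [pow_succ, ndeg_mul, ih]; ring

lemma ndeg_sσ {n : ℕ} (i : Fin (n - 1)) : ndeg (sσ i) = 0 := rfl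

lemma ndeg_sσi {n : ℕ} (i : Fin (n - 1)) : ndeg (sσi i) = 0 := by
  rfl

lemma ndeg_sτ {n : ℕ} (i : Fin (n - 1)) : ndeg (sτ i) = 1 := by
  rfl

lemma mem_SdB {n d : ℕ} {β : SB n} (h : ndeg β = d) : β ∈ SdB d n := h
/-- The monoid algebra `𝕂[SB_n]`. -/
abbrev MA (n : ℕ) : Type := MonoidAlgebra K (SB n)

/-- The Hecke relations `σ_k² = (q-1)σ_k + q`. -/
def hrel (n : ℕ) : MA n → MA n → Prop := fun x y =>
  ∃ i : Fin (n - 1), x = (MonoidAlgebra.of K (SB n) (sσ i)) ^ 2 ∧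
    y = (q - 1) • MonoidAlgebra.of K (SB n) (sσ i) + q • 1

/-- The singular Hecke algebra `H(SB_n)`. -/
def H (n : ℕ) : Type := RingQuot (hrel n)

instance (n : ℕ) : Ring (H n) := inferInstanceAs (Ring (RingQuot (hrel n)))
instance (n : ℕ) : Algebra K (H n) := inferInstanceAs (Algebra K (RingQuot (hrel n)))

/-- The natural map `SB_n → H(SB_n)`. -/
def ιH {n : ℕ} (β : SB n) : H n := RingQuot.mkAlgHom K (hrel n) (MonoidAlgebra.of K (SB n) β)

/-- The image of `σ_{i+1}` in the singular Hecke algebra. -/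
def σH {n : ℕ} (i : Fin (n - 1)) : H n := ιH (sσ i)
/-- The image of `τ_{i+1}` in the singular Hecke algebra. -/
def τH {n : ℕ} (i : Fin (n - 1)) : H n := ιH (sτ i)

/-- Scalars inside the singular Hecke algebra. -/
def cK {n : ℕ} (c : K) : H n := algebraMap K (H n) c

/-- `H(S_d B_n)` : the 𝕂-subspace of `H(SB_n)` spanned by the braids with `d` singular points. -/
def HSd (d n : ℕ) : Submodule K (H n) := Submodule.span K (ιH '' SdB d n)

lemma ιH_mem {n d : ℕ} {β : SB n} (h : β ∈ SdB d n) : ιH β ∈ HSd d n :=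
  Submodule.subset_span ⟨β, h, rfl⟩

/-- Map on generators realizing the inclusion `SB_n ↪ SB_{n+1}`. -/
def genMap {n : ℕ} : SBGen n → SBGen (n + 1)
  | .s i => .s (Fin.castLE (by omega) i)
  | .si i => .si (Fin.castLE (by omega) i)
  | .t i => .t (Fin.castLE (by omega) i)

lemma incl_wd {n : ℕ} :
    SBcon n ≤ Con.ker ((SBcon (n + 1)).mk'.comp (FreeMonoid.map genMap)) := by
  refine Con.conGen_le.mpr ?_
  rintro x y h
  rw [Con.ker_rel]
  cases h with
  | inv_right i => exact (Con.eq _).mpr (ConGen.Rel.of _ _ (SBRel.inv_right _))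
  | inv_left i => exact (Con.eq _).mpr (ConGen.Rel.of _ _ (SBRel.inv_left _))
  | sigma_tau i => exact (Con.eq _).mpr (ConGen.Rel.of _ _ (SBRel.sigma_tau _))
  | braid i j hij =>
      refine (Con.eq _).mpr (ConGen.Rel.of _ _ (SBRel.braid _ _ ?_))
      simpa [adj] using hij
  | braid_tau i j hij =>
      refine (Con.eq _).mpr (ConGen.Rel.of _ _ (SBRel.braid_tau _ _ ?_))
      simpa [adj] using hij
  | ss_comm i j hij =>
      refine (Con.eq _).mpr (ConGen.Rel.of _ _ (SBRel.ss_comm _ _ ?_))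
      simpa [far] using hij
  | st_comm i j hij =>
      refine (Con.eq _).mpr (ConGen.Rel.of _ _ (SBRel.st_comm _ _ ?_))
      simpa [far] using hij
  | tt_comm i j hij =>
      refine (Con.eq _).mpr (ConGen.Rel.of _ _ (SBRel.tt_comm _ _ ?_))
      simpa [far] using hij

/-- The natural monoid homomorphism `SB_n → SB_{n+1}`. -/
def incl {n : ℕ} : SB n →* SB (n + 1) :=
  Con.lift _ ((SBcon (n + 1)).mk'.comp (FreeMonoid.map genMap)) incl_wd

lemma degF_genMap {n : ℕ} (w : FreeMonoid (SBGen n)) :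
    degF (n + 1) (FreeMonoid.map genMap w) = degF n w := by
  change ((degF (n+1)).comp (FreeMonoid.map genMap)) w = degF n w
  refine DFunLike.congr_fun (FreeMonoid.hom_eq fun a => ?_) w
  cases a <;> rfl

lemma ndeg_incl {n : ℕ} (β : SB n) : ndeg (incl β) = ndeg β := by
  induction β using Con.induction_on with
  | H w =>
    show Multiplicative.toAdd (degF (n + 1) (FreeMonoid.map genMap w)) =
      Multiplicative.toAdd (degF n w)
    rw [degF_genMap]

/-- The generator `σ_n` of `SB_{n+2}` (0-indexed `n`), used in the Markov condition. -/
def lastGen (n : ℕ) : Fin ((n + 2) - 1) := ⟨n, by omega⟩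

/-- A collection of 𝕂-linear maps `H(S_d B_n) → 𝕂(z)`, `n ≥ 1`
(index `n` in the collection corresponds to `n+1` strands). -/
abbrev TRc (d : ℕ) : Type := ∀ n : ℕ, HSd d (n + 1) →ₗ[K] Kz

/-- The Markov trace conditions. -/
def IsMarkov (d : ℕ) (T : TRc d) : Prop :=
  (∀ (n k l : ℕ) (α β : SB (n + 1)), α ∈ SdB k (n + 1) → β ∈ SdB l (n + 1) → k + l = d →
    ∀ (h₁ : ιH (α * β) ∈ HSd d (n + 1)) (h₂ : ιH (β * α) ∈ HSd d (n + 1)),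
      T n ⟨ιH (α * β), h₁⟩ = T n ⟨ιH (β * α), h₂⟩) ∧
  (∀ (n : ℕ) (β : SB (n + 1)), β ∈ SdB d (n + 1) →
    ∀ (h₁ : ιH (incl β) ∈ HSd d (n + 2)) (h₂ : ιH β ∈ HSd d (n + 1)),
      T (n + 1) ⟨ιH (incl β), h₁⟩ = T n ⟨ιH β, h₂⟩) ∧
  (∀ (n : ℕ) (β : SB (n + 1)), β ∈ SdB d (n + 1) →
    ∀ (h₁ : ιH (incl β * sσ (lastGen n)) ∈ HSd d (n + 2)) (h₂ : ιH β ∈ HSd d (n + 1)),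
      T (n + 1) ⟨ιH (incl β * sσ (lastGen n)), h₁⟩ = z * T n ⟨ιH β, h₂⟩)

/-- `TR_d` : the 𝕂(z)-vector space of Markov traces on `{H(S_d B_n)}ₙ`. -/
def TR (d : ℕ) : Submodule Kz (TRc d) where
  carrier := {T | IsMarkov d T}
  add_mem' := by
    rintro a b ⟨ha1, ha2, ha3⟩ ⟨hb1, hb2, hb3⟩
    refine ⟨?_, ?_, ?_⟩
    · intro n k l α β hα hβ hkl h₁ h₂
      simp only [Pi.add_apply, LinearMap.add_apply,
        ha1 n k l α β hα hβ hkl h₁ h₂, hb1 n k l α β hα hβ hkl h₁ h₂]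
    · intro n β hβ h₁ h₂
      simp only [Pi.add_apply, LinearMap.add_apply, ha2 n β hβ h₁ h₂, hb2 n β hβ h₁ h₂]
    · intro n β hβ h₁ h₂
      simp only [Pi.add_apply, LinearMap.add_apply, ha3 n β hβ h₁ h₂, hb3 n β hβ h₁ h₂]
      ring
  zero_mem' := by
    refine ⟨?_, ?_, ?_⟩ <;> intros <;> simp
  smul_mem' := by
    rintro c a ⟨ha1, ha2, ha3⟩
    refine ⟨?_, ?_, ?_⟩
    · intro n k l α β hα hβ hkl h₁ h₂
      simp only [Pi.smul_apply, LinearMap.smul_apply, ha1 n k l α β hα hβ hkl h₁ h₂]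
    · intro n β hβ h₁ h₂
      simp only [Pi.smul_apply, LinearMap.smul_apply, ha2 n β hβ h₁ h₂]
    · intro n β hβ h₁ h₂
      simp only [Pi.smul_apply, LinearMap.smul_apply, ha3 n β hβ h₁ h₂, smul_eq_mul]
      ring

lemma ndeg_list_prod {n : ℕ} (l : List (SB n)) : ndeg l.prod = (l.map ndeg).sum := by
  induction l with
  | nil => simpa using ndeg_one
  | cons a l ih => simp [ndeg_mul, ih]

lemma mem_expr {m d : ℕ} (α : Fin (d + 1) → SB m) (hα : ∀ j, α j ∈ SdB 0 m)
    (idx : Fin d → Fin (m - 1)) :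
    (α 0 * (List.ofFn fun j : Fin d => sτ (idx j) * α j.succ).prod) ∈ SdB d m := by
  refine mem_SdB ?_
  rw [ndeg_mul, ndeg_list_prod, List.map_ofFn, hα 0]
  have h : (fun j : Fin d => ndeg (sτ (idx j) * α j.succ)) = fun _ => 1 := by
    funext j; rw [ndeg_mul, ndeg_sτ, hα j.succ]
  rw [show ndeg ∘ (fun j : Fin d => sτ (idx j) * α j.succ)
      = fun j : Fin d => ndeg (sτ (idx j) * α j.succ) from rfl, h]
  simp

lemma mem_exprS {m d : ℕ} (α : Fin (d + 1) → SB m) (hα : ∀ j, α j ∈ SdB 0 m)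
    (idx : Fin d → Fin (m - 1)) (S : Finset (Fin d)) :
    (α 0 * (List.ofFn fun j : Fin d =>
      (if j ∈ S then sσ (idx j) else 1) * α j.succ).prod) ∈ SdB 0 m := by
  refine mem_SdB ?_
  rw [ndeg_mul, ndeg_list_prod, List.map_ofFn, hα 0]
  have h : (fun j : Fin d => ndeg ((if j ∈ S then sσ (idx j) else 1) * α j.succ))
      = fun _ => 0 := by
    funext j
    rw [ndeg_mul, hα j.succ]
    split <;> simp [ndeg_sσ, ndeg_one]
  rw [show ndeg ∘ (fun j : Fin d => (if j ∈ S then sσ (idx j) else 1) * α j.succ)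
      = fun j : Fin d => ndeg ((if j ∈ S then sσ (idx j) else 1) * α j.succ) from rfl, h]
  simp

lemma mem_tau_pow {n : ℕ} (i : Fin (n - 1)) (d : ℕ) : (sτ i) ^ d ∈ SdB d n := by
  refine mem_SdB ?_; simp [ndeg_pow, ndeg_sτ]

lemma mem_tau_pow_sigma {n : ℕ} (i i' : Fin (n - 1)) (d : ℕ) :
    (sτ i) ^ d * sσ i' ∈ SdB d n := by
  refine mem_SdB ?_; simp [ndeg_mul, ndeg_pow, ndeg_sτ, ndeg_sσ]

lemma mem_tau_tau {n : ℕ} (i i' : Fin (n - 1)) (a b : ℕ) :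
    (sτ i) ^ a * (sτ i') ^ b ∈ SdB (a + b) n := by
  refine mem_SdB ?_; simp [ndeg_mul, ndeg_pow, ndeg_sτ]

lemma mem_tau_tau_sigma {n : ℕ} (i i' i'' : Fin (n - 1)) (a b : ℕ) :
    (sτ i) ^ a * (sτ i') ^ b * sσ i'' ∈ SdB (a + b) n := by
  refine mem_SdB ?_; simp [ndeg_mul, ndeg_pow, ndeg_sτ, ndeg_sσ]

/-- `σ_{i+1}` with out-of-range indices interpreted as `1`. -/
def sσ' (n : ℕ) (i : ℕ) : SB n := if h : i < n - 1 then sσ ⟨i, h⟩ else 1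

/-- `descChain n m = σ_{n-1} σ_{n-2} ⋯ σ_{n-m}` (1-indexed), `m` letters. -/
def descChain (n : ℕ) : ℕ → SB n
  | 0 => 1
  | m + 1 => descChain n m * sσ' n (n - 2 - m)

/-- The sets `ℬ_n` describing the standard basis of the Hecke algebra `H(B_n)`:
`ℬ_1 = {1}` and `ℬ_n = {β u : β ∈ ℬ_{n-1}, u ∈ U_n}` where
`U_n = {1, σ_{n-1}, σ_{n-1}σ_{n-2}, …, σ_{n-1}⋯σ_1}`. -/
def Bset : (n : ℕ) → Set (SB n)
  | 0 => {1}
  | n + 1 => {x | ∃ β ∈ Bset n, ∃ m ≤ n, x = incl β * descChain (n + 1) m}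

/-- The set `𝒞_{d,n}` of singular braids of the form `τ_{i_1} ⋯ τ_{i_d} β` with `β ∈ ℬ_n`. -/
def Cdn (d n : ℕ) : Set (SB n) :=
  {x | ∃ idx : Fin d → Fin (n - 1), ∃ β ∈ Bset n,
    x = (List.ofFn fun j : Fin d => sτ (idx j)).prod * β}

/-! Write `X = a + b - (t - 1)` for two generators `a`, `b` satisfying the quadratic Hecke relation
and the braid relation. Multiplying `X` on the right by `1`, `a`, `b`, `ab`, `ba`, `aba` and
reducing with the two relations shows that `X` times the given combination `N` of these words is
the scalar `-t(t + 1)²`. Reversing products preserves both relations and fixes `N` (it only swaps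
`ab` and `ba`), so in the opposite algebra the same identity yields `N X = -t(t + 1)²`. For
`t = q` the scalar is a unit of `ℂ(q)`. -/

section HeckePair

variable {R A : Type*} [CommRing R] [Ring A] [Algebra R A]

structure IsHeckePair (t : R) (a b : A) : Prop where
  sq_left : a * a = (t - 1) • a + t • (1 : A)
  sq_right : b * b = (t - 1) • b + t • (1 : A)
  braid : a * b * a = b * a * b

def heckeSumAdjugate (t : R) (a b : A) : A :=
  (t * (t - 1)) • (1 : A) - (2 * t) • a - (2 * t) • b - (t - 1) • (a * b) - (t - 1) • (b * a)
    + (2 : R) • (a * b * a)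

namespace IsHeckePair

variable {t : R} {a b : A}

theorem op (h : IsHeckePair t a b) : IsHeckePair t (MulOpposite.op a) (MulOpposite.op b) where
  sq_left := by
    simp only [← MulOpposite.op_mul, h.sq_left, MulOpposite.op_add, MulOpposite.op_smul,
      MulOpposite.op_one]
  sq_right := by
    simp only [← MulOpposite.op_mul, h.sq_right, MulOpposite.op_add, MulOpposite.op_smul,
      MulOpposite.op_one]
  braid := by simp only [← MulOpposite.op_mul, ← mul_assoc, h.braid]

theorem mul_heckeSumAdjugate (h : IsHeckePair t a b) :
    (a + b - (t - 1) • (1 : A)) * heckeSumAdjugate t a b = (-(t * (t + 1) ^ 2)) • (1 : A) := by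
  set X := a + b - (t - 1) • (1 : A)
  have hXa : X * a = t • 1 + b * a := by
    simp only [X, add_mul, sub_mul, h.sq_left, smul_mul_assoc, one_mul]; abel
  have hXb : X * b = a * b + t • 1 := by
    simp only [X, add_mul, sub_mul, h.sq_right, smul_mul_assoc, one_mul]; abel
  have hXab : X * (a * b) = t • b + a * b * a := by
    rw [← mul_assoc, hXa, add_mul, smul_mul_assoc, one_mul, ← h.braid]
  have hXba : X * (b * a) = a * b * a + t • a := by
    rw [← mul_assoc, hXb, add_mul, smul_mul_assoc, one_mul]
  have hbaba : b * a * (b * a) = (t - 1) • (a * b * a) + t • (a * b) :=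
    calc b * a * (b * a) = b * (b * a * b) := by rw [← h.braid]; simp only [mul_assoc]
      _ = (b * b) * (a * b) := by simp only [mul_assoc]
      _ = (t - 1) • (a * b * a) + t • (a * b) := by
        rw [h.sq_right, add_mul, smul_mul_assoc, smul_mul_assoc, one_mul, ← mul_assoc b,
          ← h.braid]
  have hXaba : X * (a * b * a) = t • (b * a) + (t - 1) • (a * b * a) + t • (a * b) := by
    rw [show X * (a * b * a) = X * a * (b * a) by simp only [mul_assoc], hXa, add_mul,
      smul_mul_assoc, one_mul, hbaba, add_assoc]
  simp only [heckeSumAdjugate, mul_add, mul_sub, mul_smul_comm, mul_one, hXa, hXb, hXab, hXba,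
    hXaba]
  simp only [X]
  module

theorem heckeSumAdjugate_mul (h : IsHeckePair t a b) :
    heckeSumAdjugate t a b * (a + b - (t - 1) • (1 : A)) = (-(t * (t + 1) ^ 2)) • (1 : A) := by
  have h_op := congrArg MulOpposite.unop h.op.mul_heckeSumAdjugate
  simp only [heckeSumAdjugate, MulOpposite.unop_mul, MulOpposite.unop_add, MulOpposite.unop_sub,
    MulOpposite.unop_smul, MulOpposite.unop_op, MulOpposite.unop_one, mul_assoc] at h_op
  rw [← h_op, heckeSumAdjugate, sub_right_comm _ ((t - 1) • (a * b)), mul_assoc]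

end IsHeckePair

end HeckePair

lemma q_ne_zero : q ≠ 0 := RatFunc.X_ne_zero

lemma q_add_one_ne_zero : (q + 1 : K) ≠ 0 := by
  rw [q, ← RatFunc.algebraMap_X, ← map_one (algebraMap (Polynomial ℂ) K), ← map_add,
    map_ne_zero_iff _ (RatFunc.algebraMap_injective ℂ)]
  exact Polynomial.X_add_C_ne_zero 1

lemma ιH_mul {n : ℕ} (α β : SB n) : ιH (α * β) = ιH α * ιH β :=
  map_mul ((RingQuot.mkAlgHom K (hrel n)).toMonoidHom.comp (MonoidAlgebra.of K (SB n))) α β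

lemma sσ_braid {n : ℕ} {i j : Fin (n - 1)} (hij : adj i j) :
    sσ i * sσ j * sσ i = sσ j * sσ i * sσ j :=
  (Con.eq _).mpr (ConGen.Rel.of _ _ (SBRel.braid i j hij))

lemma σH_mul_self {n : ℕ} (k : Fin (n - 1)) :
    σH k * σH k = (q - 1) • σH k + q • (1 : H n) := by
  have h := RingQuot.mkAlgHom_rel K (s := hrel n) ⟨k, rfl, rfl⟩
  rw [sq, map_mul, map_add, map_smul, map_smul, map_one] at h
  exact h

lemma isHeckePair_σH {n : ℕ} {i j : Fin (n - 1)} (hij : adj i j) :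
    IsHeckePair q (σH i) (σH j) where
  sq_left := σH_mul_self i
  sq_right := σH_mul_self j
  braid := by simp only [σH, ← ιH_mul, sσ_braid hij]

theorem statement11_general (n : ℕ) (i j : Fin (n - 1)) (hij : adj i j) :
    (σH i + σH j - cK (q - 1)) *
      (-(cK (q⁻¹ * ((q + 1) ^ 2)⁻¹)) *
        (cK (q * (q - 1)) - cK (2 * q) * σH i - cK (2 * q) * σH j
          - cK (q - 1) * (σH i * σH j) - cK (q - 1) * (σH j * σH i)
          + cK 2 * (σH i * σH j * σH i))) = 1 ∧
    (-(cK (q⁻¹ * ((q + 1) ^ 2)⁻¹)) *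
        (cK (q * (q - 1)) - cK (2 * q) * σH i - cK (2 * q) * σH j
          - cK (q - 1) * (σH i * σH j) - cK (q - 1) * (σH j * σH i)
          + cK 2 * (σH i * σH j * σH i))) *
      (σH i + σH j - cK (q - 1)) = 1 := by
  have hB : σH i + σH j - cK (q - 1) = σH i + σH j - (q - 1) • (1 : H n) := by
    rw [cK, Algebra.algebraMap_eq_smul_one]
  have hN : cK (q * (q - 1)) - cK (2 * q) * σH i - cK (2 * q) * σH j
      - cK (q - 1) * (σH i * σH j) - cK (q - 1) * (σH j * σH i)
      + cK 2 * (σH i * σH j * σH i) = heckeSumAdjugate q (σH i) (σH j) := by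
    simp only [heckeSumAdjugate, cK, Algebra.algebraMap_eq_smul_one, smul_mul_assoc, one_mul]
  have hscalar : -(q⁻¹ * ((q + 1) ^ 2)⁻¹) * -(q * (q + 1) ^ 2) = 1 := by
    field_simp [q_ne_zero, q_add_one_ne_zero]
  have hP := isHeckePair_σH hij
  rw [hB, hN, cK, ← map_neg, ← Algebra.smul_def]
  constructor
  · rw [mul_smul_comm, hP.mul_heckeSumAdjugate, smul_smul, hscalar, one_smul]
  · rw [smul_mul_assoc, hP.heckeSumAdjugate_mul, smul_smul, hscalar, one_smul]

/-- For `|i-j| = 1`, the element `B_{ij} = σ_i + σ_j − (q−1)` is invertible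
in `H(SB_n)`, with inverse
`−q⁻¹(q+1)⁻² (q(q−1) − 2qσ_i − 2qσ_j − (q−1)σ_iσ_j − (q−1)σ_jσ_i + 2σ_iσ_jσ_i)`. -/
theorem statement11 (n : ℕ) (hn : 3 ≤ n) (i j : Fin (n - 1)) (hij : adj i j) :
    (σH i + σH j - cK (q - 1)) *
      (-(cK (q⁻¹ * ((q + 1) ^ 2)⁻¹)) *
        (cK (q * (q - 1)) - cK (2 * q) * σH i - cK (2 * q) * σH j
          - cK (q - 1) * (σH i * σH j) - cK (q - 1) * (σH j * σH i)
          + cK 2 * (σH i * σH j * σH i))) = 1 ∧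
    (-(cK (q⁻¹ * ((q + 1) ^ 2)⁻¹)) *
        (cK (q * (q - 1)) - cK (2 * q) * σH i - cK (2 * q) * σH j
          - cK (q - 1) * (σH i * σH j) - cK (q - 1) * (σH j * σH i)
          + cK 2 * (σH i * σH j * σH i))) *
      (σH i + σH j - cK (q - 1)) = 1 :=
  statement11_general n i j hij
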